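/- Let G be a 3-regular internally-4-connected vertex-transitive finite graph, and let (A₁,A₂) be a totally-nested tetra-cut of G. Then G[A₁] is a 4-cycle or G[A₂] is a 4-cycle. -/

import Mathlib

open SimpleGraph Set

namespace VTpaper

/-- Automorphism group acts transitively on vertices. -/
def VertexTransitive {V : Type*} (G : SimpleGraph V) : Prop :=
  ∀ u v : V, ∃ φ : G ≃g G, φ u = v

/-- Automorphism group acts transitively on ordered pairs of adjacent vertices. -/
def ArcTransitive {V : Type*} (G : SimpleGraph V) : Prop :=
  ∀ u₁ v₁ u₂ v₂ : V, G.Adj u₁ v₁ → G.Adj u₂ v₂ →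
    ∃ φ : G ≃g G, φ u₁ = u₂ ∧ φ v₁ = v₂

/-- Automorphism group acts transitively on edges. -/
def EdgeTransitive {V : Type*} (G : SimpleGraph V) : Prop :=
  ∀ e f : Sym2 V, e ∈ G.edgeSet → f ∈ G.edgeSet →
    ∃ φ : G ≃g G, e.map φ = f

/-- `G` is `d`-regular. -/
def Regular {V : Type*} (G : SimpleGraph V) (d : ℕ) : Prop :=
  ∀ v : V, (G.neighborSet v).ncard = d

/-- `G` is `k`-connected: more than `k` vertices, and deleting fewer than `k`
vertices leaves a connected graph. -/
def KConnected {V : Type*} (k : ℕ) (G : SimpleGraph V) : Prop :=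
  k < Nat.card V ∧ ∀ S : Set V, S.Finite → S.ncard < k → (G.induce Sᶜ).Connected

/-- A (vertex) separation of order `k`. -/
def IsSep {V : Type*} (G : SimpleGraph V) (k : ℕ) (A B : Set V) : Prop :=
  A ∪ B = Set.univ ∧ (A \ B).Nonempty ∧ (B \ A).Nonempty ∧
    (∀ a ∈ A \ B, ∀ b ∈ B \ A, ¬ G.Adj a b) ∧ (A ∩ B).ncard = k

/-- A side induces a claw `K_{1,3}`. -/
def InducesClaw {V : Type*} (G : SimpleGraph V) (A : Set V) : Prop :=
  Nonempty (G.induce A ≃g completeBipartiteGraph (Fin 1) (Fin 3))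

/-- Internally 4-connected: 3-connected and every 3-separation has a side inducing a claw. -/
def InternallyFourConnected {V : Type*} (G : SimpleGraph V) : Prop :=
  KConnected 3 G ∧ ∀ A B : Set V, IsSep G 3 A B → InducesClaw G A ∨ InducesClaw G B

/-- Quasi-4-connected: 3-connected and every 3-separation has a side with one interior vertex. -/
def QuasiFourConnected {V : Type*} (G : SimpleGraph V) : Prop :=
  KConnected 3 G ∧ ∀ A B : Set V, IsSep G 3 A B → (A \ B).ncard = 1 ∨ (B \ A).ncard = 1

/-- 2-quasi-5-connected. -/
def TwoQuasiFiveConnected {V : Type*} (G : SimpleGraph V) : Prop :=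
  QuasiFourConnected G ∧
    ∀ A B : Set V, IsSep G 4 A B → (A \ B).ncard ≤ 2 ∨ (B \ A).ncard ≤ 2

/-- The set of edges of `G` crossing from `A` to `B`. -/
def cutEdges {V : Type*} (G : SimpleGraph V) (A B : Set V) : Set (Sym2 V) :=
  {e | ∃ a b, a ∈ A ∧ b ∈ B ∧ G.Adj a b ∧ e = s(a, b)}

/-- An edge-cut: a bipartition of the vertex set with both sides nonempty. -/
def IsEdgeCut {V : Type*} (G : SimpleGraph V) (A B : Set V) : Prop :=
  A ∪ B = Set.univ ∧ Disjoint A B ∧ A.Nonempty ∧ B.Nonempty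

/-- A set of edges forms a matching (pairwise vertex-disjoint). -/
def IsMatchingSet {V : Type*} (S : Set (Sym2 V)) : Prop :=
  S.Pairwise fun e f => ∀ v : V, ¬ (v ∈ e ∧ v ∈ f)

/-- A tetra-cut: a 4-edge-cut whose cut edges form a matching. -/
def IsTetraCut {V : Type*} (G : SimpleGraph V) (A B : Set V) : Prop :=
  IsEdgeCut G A B ∧ (cutEdges G A B).ncard = 4 ∧ IsMatchingSet (cutEdges G A B)

/-- Two edge-cuts are nested: a side of one is contained in a side of the other. -/
def NestedCut {V : Type*} (A B C D : Set V) : Prop :=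
  A ⊆ C ∨ A ⊆ D ∨ B ⊆ C ∨ B ⊆ D

/-- `G` (on `V'`) is a `K_r`-expansion of `H` (on `V`) along the projection `f`. -/
def IsKrExpansionAlong {V V' : Type*} (H : SimpleGraph V) (G : SimpleGraph V')
    (r : ℕ) (f : V' → V) : Prop :=
  Function.Surjective f ∧
  (∀ v : V, (f ⁻¹' {v}).ncard = r) ∧
  (∀ x y : V', x ≠ y → f x = f y → G.Adj x y) ∧
  (∀ x y : V', G.Adj x y → f x ≠ f y → H.Adj (f x) (f y)) ∧
  (∀ x : V', ∃! y : V', G.Adj x y ∧ f x ≠ f y) ∧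
  (∀ u v : V, H.Adj u v → ∃! p : V' × V', f p.1 = u ∧ f p.2 = v ∧ G.Adj p.1 p.2)

def IsKrExpansion {V V' : Type*} (H : SimpleGraph V) (G : SimpleGraph V') (r : ℕ) : Prop :=
  ∃ f : V' → V, IsKrExpansionAlong H G r f

/-- `G` is a clique-expansion of `H` along `f`: the fibre over `v` is a clique of
size `deg v`, and the cross edges form a perfect matching, one per edge of `H`. -/
def IsCliqueExpansionAlong {V V' : Type*} (H : SimpleGraph V) (G : SimpleGraph V')
    (f : V' → V) : Prop :=
  (∀ v : V, (f ⁻¹' {v}).ncard = (H.neighborSet v).ncard) ∧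
  (∀ x y : V', x ≠ y → f x = f y → G.Adj x y) ∧
  (∀ x y : V', G.Adj x y → f x ≠ f y → H.Adj (f x) (f y)) ∧
  (∀ x : V', ∃! y : V', G.Adj x y ∧ f x ≠ f y) ∧
  (∀ u v : V, H.Adj u v → ∃! p : V' × V', f p.1 = u ∧ f p.2 = v ∧ G.Adj p.1 p.2)

/-- `G` is a `C_k`-expansion of `H` along `f`: each fibre induces a `k`-cycle,
and the cross edges form a perfect matching, one per edge of `H`. -/
def IsCycleExpansionAlong {V V' : Type*} (H : SimpleGraph V) (G : SimpleGraph V')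
    (k : ℕ) (f : V' → V) : Prop :=
  Function.Surjective f ∧
  (∀ v : V, Nonempty ((G.induce (f ⁻¹' {v})) ≃g SimpleGraph.cycleGraph k)) ∧
  (∀ x y : V', G.Adj x y → f x ≠ f y → H.Adj (f x) (f y)) ∧
  (∀ x : V', ∃! y : V', G.Adj x y ∧ f x ≠ f y) ∧
  (∀ u v : V, H.Adj u v → ∃! p : V' × V', f p.1 = u ∧ f p.2 = v ∧ G.Adj p.1 p.2)

/-- The line graph of `G`, on the vertex set `G.edgeSet`. -/
def LineGraph {V : Type*} (G : SimpleGraph V) : SimpleGraph G.edgeSet where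
  Adj e f := e ≠ f ∧ ∃ v : V, v ∈ e.1 ∧ v ∈ f.1
  symm := Std.Symm.mk <| by
    rintro e f ⟨hne, v, hv1, hv2⟩
    exact ⟨hne.symm, v, hv2, hv1⟩
  loopless := ⟨fun e h => h.1 rfl⟩

/-- The set of edges of `G` incident with `v`, as vertices of the line graph. -/
def incEdges {V : Type*} (G : SimpleGraph V) (v : V) : Set G.edgeSet :=
  {e | v ∈ e.1}

/-- A triangle in a graph, as a set of vertices. -/
def IsTriangle {α : Type*} (L : SimpleGraph α) (T : Set α) : Prop :=
  T.ncard = 3 ∧ L.IsClique T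

/-- The quotient of `G` by a partition `P` of its vertex set. -/
def quotGraph {V : Type*} (G : SimpleGraph V) (P : Set (Set V)) : SimpleGraph P where
  Adj s t := s ≠ t ∧ ∃ x ∈ (s : Set V), ∃ y ∈ (t : Set V), G.Adj x y
  symm := Std.Symm.mk <| by
    rintro s t ⟨h, x, hx, y, hy, hxy⟩
    exact ⟨h.symm, y, hy, x, hx, hxy.symm⟩
  loopless := ⟨fun s h => h.1 rfl⟩

/-- The separator edges of a mixed-separation `(A,B)`: edges between `A∖B` and `B∖A`. -/
def sepEdges {V : Type*} (G : SimpleGraph V) (A B : Set V) : Set (Sym2 V) :=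
  {e | ∃ a b, a ∈ A \ B ∧ b ∈ B \ A ∧ G.Adj a b ∧ e = s(a, b)}

/-- A mixed-separation. -/
def IsMixedSep {V : Type*} (G : SimpleGraph V) (A B : Set V) : Prop :=
  A ∪ B = Set.univ ∧ (A \ B).Nonempty ∧ (B \ A).Nonempty

/-- Order of a mixed-separation: separator vertices plus separator edges. -/
noncomputable def mixedOrder {V : Type*} (G : SimpleGraph V) (A B : Set V) : ℕ :=
  (A ∩ B).ncard + (sepEdges G A B).ncard

/-- Matching-condition: the separator edges form a matching and avoid separator vertices. -/
def MatchingCond {V : Type*} (G : SimpleGraph V) (A B : Set V) : Prop :=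
  IsMatchingSet (sepEdges G A B) ∧ ∀ e ∈ sepEdges G A B, ∀ v ∈ A ∩ B, v ∉ e

/-- Degree-condition: every separator vertex has at least two neighbours in each open side. -/
def DegreeCond {V : Type*} (G : SimpleGraph V) (A B : Set V) : Prop :=
  ∀ v ∈ A ∩ B, 2 ≤ (G.neighborSet v ∩ (A \ B)).ncard ∧
    2 ≤ (G.neighborSet v ∩ (B \ A)).ncard

/-- A tetra-separation: a mixed-4-separation satisfying the matching- and degree-conditions. -/
def IsTetraSep {V : Type*} (G : SimpleGraph V) (A B : Set V) : Prop :=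
  IsMixedSep G A B ∧ mixedOrder G A B = 4 ∧ MatchingCond G A B ∧ DegreeCond G A B

/-- Two mixed-separations are nested. -/
def NestedSep {V : Type*} (A B C D : Set V) : Prop :=
  (A ⊆ C ∧ D ⊆ B) ∨ (A ⊆ D ∧ C ⊆ B) ∨ (C ⊆ A ∧ B ⊆ D) ∨ (D ⊆ A ∧ B ⊆ C)

/-- A totally-nested tetra-separation. -/
def TotallyNestedTetraSep {V : Type*} (G : SimpleGraph V) (A B : Set V) : Prop :=
  IsTetraSep G A B ∧ ∀ C D : Set V, IsTetraSep G C D → NestedSep A B C D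

/-- A side induces a `K₄`. -/
def InducesK4 {V : Type*} (G : SimpleGraph V) (A : Set V) : Prop :=
  A.ncard = 4 ∧ G.IsClique A

/-- Essentially 5-connected. -/
def EssentiallyFiveConnected {V : Type*} (G : SimpleGraph V) : Prop :=
  KConnected 4 G ∧ ∀ A B : Set V, IsTetraSep G A B →
    A ∩ B = ∅ ∧ (InducesK4 G A ∨ InducesK4 G B)

/-- Quasi-5-connected: 4-connected with no tetra-separation. -/
def QuasiFiveConnected {V : Type*} (G : SimpleGraph V) : Prop :=
  KConnected 4 G ∧ ∀ A B : Set V, ¬ IsTetraSep G A B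

/-- The square of a cycle, `C_ℓ²`, on `ZMod ℓ`. -/
def cycleSq (ℓ : ℕ) : SimpleGraph (ZMod ℓ) where
  Adj i j := i ≠ j ∧ (j = i + 1 ∨ i = j + 1 ∨ j = i + 2 ∨ i = j + 2)
  symm := Std.Symm.mk <| by
    rintro i j ⟨h, h2⟩
    exact ⟨h.symm, by tauto⟩
  loopless := ⟨fun i h => h.1 rfl⟩

/-- A cycle-decomposition of `G` witnessing that it is a cycle of triangle-bags of length `ℓ`. -/
def IsCycleOfTriangleBags {V : Type*} (G : SimpleGraph V) (ℓ : ℕ) : Prop :=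
  ∃ B : ZMod ℓ → Set V,
    (⋃ i, B i) = Set.univ ∧
    (∀ i, (B i).ncard = 3 ∧ G.IsClique (B i)) ∧
    (∀ x y : V, G.Adj x y → ∃ i, x ∈ B i ∧ y ∈ B i) ∧
    (∀ i, (B i ∩ B (i + 1)).ncard = 2) ∧
    (∀ i j, i ≠ j → i ≠ j + 1 → j ≠ i + 1 →
      (B i ∩ B (i + 1)) ∩ (B j ∩ B (j + 1)) = ∅) ∧
    (∀ v i j, v ∈ B i → v ∈ B j → i ≠ j → v ∈ B (i + 1) ∨ v ∈ B (j + 1))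

/-- The 3-dimensional hypercube graph `Q₃`. -/
def cubeGraph : SimpleGraph (Fin 3 → Bool) where
  Adj x y := ∃! i, x i ≠ y i
  symm := Std.Symm.mk <| by
    rintro x y ⟨i, hi, hu⟩
    exact ⟨i, hi.symm, fun j hj => hu j hj.symm⟩
  loopless := Std.Irrefl.mk <| by
    rintro x ⟨i, hi, -⟩
    exact hi rfl

/-- The graph on arcs of `G` from Observation: vertices are ordered adjacent pairs. -/
def arcGraph {V : Type*} (G : SimpleGraph V) : SimpleGraph {p : V × V // G.Adj p.1 p.2} where
  Adj x y := x ≠ y ∧ ((x.1.1 = y.1.2 ∧ x.1.2 = y.1.1) ∨ x.1.1 = y.1.1)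
  symm := Std.Symm.mk <| by
    rintro x y ⟨h, h2 | h3⟩
    · exact ⟨h.symm, Or.inl ⟨h2.2.symm, h2.1.symm⟩⟩
    · exact ⟨h.symm, Or.inr h3.symm⟩
  loopless := ⟨fun x h => h.1 rfl⟩

end VTpaper

namespace VTaux

open VTpaper

variable {V : Type*}

lemma cutEdges_comm (G : SimpleGraph V) (A B : Set V) : cutEdges G B A = cutEdges G A B := by
  ext e
  constructor <;> rintro ⟨a, b, ha, hb, hab, rfl⟩ <;>
    exact ⟨b, a, hb, ha, hab.symm, Sym2.eq_swap.symm⟩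

lemma isTetraCut_comm {G : SimpleGraph V} {A B : Set V} (h : IsTetraCut G A B) :
    IsTetraCut G B A := by
  obtain ⟨⟨hu, hd, hA, hB⟩, hc, hm⟩ := h
  exact ⟨⟨by rw [Set.union_comm]; exact hu, hd.symm, hB, hA⟩,
    by rw [cutEdges_comm]; exact hc, by rw [cutEdges_comm]; exact hm⟩

lemma cutEdges_image (G : SimpleGraph V) (φ : G ≃g G) (A B : Set V) :
    cutEdges G (φ '' A) (φ '' B) = Sym2.map φ '' cutEdges G A B := by
  ext e
  constructor
  · rintro ⟨a, b, ⟨a', ha', rfl⟩, ⟨b', hb', rfl⟩, hab, rfl⟩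
    exact ⟨s(a', b'), ⟨a', b', ha', hb', φ.map_adj_iff.mp hab, rfl⟩, rfl⟩
  · rintro ⟨e', ⟨a, b, ha, hb, hab, rfl⟩, rfl⟩
    exact ⟨φ a, φ b, ⟨a, ha, rfl⟩, ⟨b, hb, rfl⟩, φ.map_adj_iff.mpr hab, rfl⟩

lemma isTetraCut_image {G : SimpleGraph V} {A B : Set V} (φ : G ≃g G) (h : IsTetraCut G A B) :
    IsTetraCut G (φ '' A) (φ '' B) := by
  obtain ⟨⟨hu, hd, hA, hB⟩, hc, hm⟩ := h
  have hinj : Function.Injective (φ : V → V) := φ.toEquiv.injective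
  have hinj2 : Function.Injective (Sym2.map (φ : V → V)) := Sym2.map.injective hinj
  refine ⟨⟨?_, ?_, hA.image _, hB.image _⟩, ?_, ?_⟩
  · rw [← Set.image_union, hu, Set.image_univ]
    exact φ.toEquiv.surjective.range_eq
  · exact (Set.disjoint_image_iff hinj).mpr hd
  · rw [cutEdges_image, Set.ncard_image_of_injective _ hinj2]
    exact hc
  · rw [cutEdges_image]
    rintro _ ⟨e, he, rfl⟩ _ ⟨f, hf, rfl⟩ hne v ⟨hv1, hv2⟩
    obtain ⟨x, hx, rfl⟩ := Sym2.mem_map.mp hv1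
    obtain ⟨y, hy, hyx⟩ := Sym2.mem_map.mp hv2
    have hxy : y = x := hinj hyx
    exact hm he hf (fun hef => hne (by rw [hef])) x ⟨hx, hxy ▸ hy⟩

lemma edgeCut_compl {G : SimpleGraph V} {A B : Set V} (h : IsEdgeCut G A B) : B = Aᶜ := by
  obtain ⟨hu, hd, -, -⟩ := h
  ext x
  constructor
  · intro hx hxA
    exact Set.disjoint_left.mp hd hxA hx
  · intro hx
    rcases (Set.eq_univ_iff_forall.mp hu x) with h1 | h2
    · exact absurd h1 hx
    · exact h2

lemma endpoint_cover {V : Type*} [Fintype V] {G : SimpleGraph V} {A₁ A₂ : Set V}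
    (hvt : VertexTransitive G) (h : IsTetraCut G A₁ A₂)
    (hnest : ∀ C D : Set V, IsTetraCut G C D → NestedCut A₁ A₂ C D)
    (hle : A₁.ncard ≤ A₂.ncard) :
    ∀ v ∈ A₁, ∃ b ∈ A₂, G.Adj v b := by
  intro v hv
  by_contra hvno
  push_neg at hvno
  have hFne : (cutEdges G A₁ A₂).Nonempty :=
    Set.nonempty_of_ncard_ne_zero (by rw [h.2.1]; norm_num)
  obtain ⟨e, a, b, ha, hb, hab, rfl⟩ := hFne
  obtain ⟨φ, hφ⟩ := hvt a v
  have hB := isTetraCut_image φ h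
  have hn := hnest _ _ hB
  have hinj : Function.Injective (φ : V → V) := φ.toEquiv.injective
  have hA2 : A₂ = A₁ᶜ := edgeCut_compl h.1
  have hB2 : φ '' A₂ = (φ '' A₁)ᶜ := edgeCut_compl hB.1
  have hvB : v ∈ φ '' A₁ := ⟨a, ha, hφ⟩
  have hwB : φ b ∈ φ '' A₂ := ⟨b, hb, rfl⟩
  have hadj : G.Adj v (φ b) := hφ ▸ φ.map_adj_iff.mpr hab
  have hdisjB : Disjoint (φ '' A₁) (φ '' A₂) := hB.1.2.1
  have hdisjA : Disjoint A₁ A₂ := h.1.2.1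
  rcases hn with h1 | h2 | h3 | h4
  · rcases (em (φ b ∈ A₁)) with hw | hw
    · exact Set.disjoint_left.mp hdisjB (h1 hw) hwB
    · exact hvno _ (hA2 ▸ hw) hadj
  · exact Set.disjoint_left.mp hdisjB hvB (h2 hv)
  · have hsub : φ '' A₂ ⊆ A₁ := by
      rw [hB2]
      intro x hx
      by_contra hxA
      exact hx (h3 (hA2 ▸ (hxA : x ∈ A₁ᶜ)))
    have heq : φ '' A₂ = A₁ := by
      apply Set.eq_of_subset_of_ncard_le hsub _ (Set.toFinite _)
      rw [Set.ncard_image_of_injective _ hinj]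
      exact hle
    have hB1eq : φ '' A₁ = A₂ := by
      have := congrArg compl hB2
      rw [compl_compl] at this
      rw [← this, heq, ← hA2]
    exact Set.disjoint_left.mp hdisjA hv (hB1eq ▸ hvB)
  · have hsub : φ '' A₁ ⊆ A₁ := by
      intro x hx
      by_contra hxA
      have hxA2 : x ∈ A₂ := hA2 ▸ (hxA : x ∈ A₁ᶜ)
      exact Set.disjoint_left.mp hdisjB hx (h4 hxA2)
    have heq : φ '' A₁ = A₁ := by
      apply Set.eq_of_subset_of_ncard_le hsub _ (Set.toFinite _)
      rw [Set.ncard_image_of_injective _ hinj]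
    have hB2eq : φ '' A₂ = A₂ := by rw [hB2, heq, ← hA2]
    exact hvno _ (hB2eq ▸ hwB) hadj

lemma unique_partner {V : Type*} {G : SimpleGraph V} {A₁ A₂ : Set V}
    (h : IsTetraCut G A₁ A₂) {v b b' : V} (hv : v ∈ A₁) (hb : b ∈ A₂) (hb' : b' ∈ A₂)
    (hab : G.Adj v b) (hab' : G.Adj v b') : b = b' := by
  by_contra hne
  have he : s(v, b) ∈ cutEdges G A₁ A₂ := ⟨v, b, hv, hb, hab, rfl⟩
  have he' : s(v, b') ∈ cutEdges G A₁ A₂ := ⟨v, b', hv, hb', hab', rfl⟩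
  have hEne : s(v, b) ≠ s(v, b') := fun hc => hne (Sym2.congr_right.mp hc)
  exact h.2.2 he he' hEne v ⟨Sym2.mem_mk_left v b, Sym2.mem_mk_left v b'⟩

lemma side_structure {V : Type*} [Fintype V] {G : SimpleGraph V} {A₁ A₂ : Set V}
    (hreg : Regular G 3) (h : IsTetraCut G A₁ A₂)
    (hcov : ∀ v ∈ A₁, ∃ b ∈ A₂, G.Adj v b) :
    A₁.ncard = 4 ∧ ∀ v ∈ A₁, (G.neighborSet v ∩ A₁).ncard = 2 := by
  classical
  have hdisj : Disjoint A₁ A₂ := h.1.2.1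
  have huniv : A₁ ∪ A₂ = Set.univ := h.1.1
  -- upper bound on |A₁|
  have hle4 : A₁.ncard ≤ 4 := by
    rw [← h.2.1]
    set f : V → Sym2 V := fun v => if hv : v ∈ A₁ then s(v, (hcov v hv).choose) else s(v, v)
      with hf
    apply Set.ncard_le_ncard_of_injOn f _ _ (Set.toFinite _)
    · intro v hv
      simp only [hf, dif_pos hv]
      obtain ⟨hb, hadj⟩ := (hcov v hv).choose_spec
      exact ⟨v, _, hv, hb, hadj, rfl⟩
    · intro v hv w hw hvw
      simp only [hf, dif_pos hv, dif_pos hw] at hvw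
      rcases Sym2.eq_iff.mp hvw with ⟨h1, -⟩ | ⟨h1, h2⟩
      · exact h1
      · exfalso
        obtain ⟨hb, -⟩ := (hcov w hw).choose_spec
        exact Set.disjoint_left.mp hdisj hv (h1 ▸ hb)
  -- lower bound
  have hge4 : 4 ≤ A₁.ncard := by
    obtain ⟨v₀, -⟩ := h.1.2.2.1
    rw [← h.2.1]
    set g : Sym2 V → V := fun e =>
      if he : e ∈ cutEdges G A₁ A₂ then he.choose else v₀ with hg
    apply Set.ncard_le_ncard_of_injOn g _ _ (Set.toFinite _)
    · intro e he
      simp only [hg, dif_pos he]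
      obtain ⟨b, ha, -, -, -⟩ := he.choose_spec
      exact ha
    · intro e he f hf hef
      simp only [hg, dif_pos he, dif_pos hf] at hef
      obtain ⟨b, -, -, -, hee⟩ := he.choose_spec
      obtain ⟨b', -, -, -, hff⟩ := hf.choose_spec
      by_contra hne
      generalize hq : Exists.choose he = a at hef hee
      generalize hq' : Exists.choose hf = a' at hef hff
      subst hef
      refine h.2.2 he hf hne a ⟨?_, ?_⟩
      · rw [hee]; exact Sym2.mem_mk_left _ _
      · rw [hff]; exact Sym2.mem_mk_left _ _
  refine ⟨le_antisymm hle4 hge4, ?_⟩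
  intro v hv
  obtain ⟨b, hb, hadj⟩ := hcov v hv
  have hN2 : G.neighborSet v ∩ A₂ = {b} := by
    apply Set.eq_singleton_iff_unique_mem.mpr
    refine ⟨⟨hadj, hb⟩, ?_⟩
    intro b' ⟨hadj', hb'⟩
    exact (unique_partner h hv hb hb' hadj hadj').symm
  have hsum : (G.neighborSet v ∩ A₁).ncard + (G.neighborSet v ∩ A₂).ncard = 3 := by
    rw [← Set.ncard_union_eq (hdisj.mono (Set.inter_subset_right) (Set.inter_subset_right))
      (Set.toFinite _) (Set.toFinite _), ← Set.inter_union_distrib_left, huniv,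
      Set.inter_univ]
    exact hreg v
  rw [hN2, Set.ncard_singleton] at hsum
  omega

lemma c4_of_deg2 {V : Type*} [Fintype V] {G : SimpleGraph V} {A : Set V}
    (h4 : A.ncard = 4) (hdeg : ∀ v ∈ A, (G.neighborSet v ∩ A).ncard = 2) :
    Nonempty (G.induce A ≃g SimpleGraph.cycleGraph 4) := by
  classical
  obtain ⟨a, ha⟩ := Set.nonempty_of_ncard_ne_zero (by rw [h4]; norm_num : A.ncard ≠ 0)
  obtain ⟨b, c, hbc, hNa⟩ := Set.ncard_eq_two.mp (hdeg a ha)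
  have hb : b ∈ G.neighborSet a ∩ A := by rw [hNa]; exact Set.mem_insert _ _
  have hc : c ∈ G.neighborSet a ∩ A := by rw [hNa]; exact Set.mem_insert_iff.mpr (Or.inr rfl)
  have hadjab : G.Adj a b := hb.1
  have hadjac : G.Adj a c := hc.1
  have hbA : b ∈ A := hb.2
  have hcA : c ∈ A := hc.2
  have hab : a ≠ b := G.ne_of_adj hadjab
  have hac : a ≠ c := G.ne_of_adj hadjac
  have hsub3 : ({a, b, c} : Set V) ⊆ A :=
    Set.insert_subset_iff.mpr ⟨ha, Set.insert_subset_iff.mpr ⟨hbA,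
      Set.singleton_subset_iff.mpr hcA⟩⟩
  have h3 : ({a, b, c} : Set V).ncard = 3 := by
    rw [Set.ncard_insert_of_notMem (by simp [hab, hac]) (Set.toFinite _), Set.ncard_pair hbc]
  have hdne : (A \ {a, b, c}).Nonempty := by
    apply Set.nonempty_of_ncard_ne_zero
    rw [Set.ncard_diff hsub3 (Set.toFinite _), h3, h4]
    norm_num
  obtain ⟨d, hdA, hdn⟩ := hdne
  have hda : d ≠ a := fun hx => hdn (by simp [hx])
  have hdb : d ≠ b := fun hx => hdn (by simp [hx])
  have hdc : d ≠ c := fun hx => hdn (by simp [hx])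
  have hAeq : A = {a, b, c, d} := by
    refine (Set.eq_of_subset_of_ncard_le ?_ ?_ (Set.toFinite _)).symm
    · exact Set.insert_subset_iff.mpr ⟨ha, Set.insert_subset_iff.mpr ⟨hbA,
        Set.insert_subset_iff.mpr ⟨hcA, Set.singleton_subset_iff.mpr hdA⟩⟩⟩
    · rw [h4]
      rw [Set.ncard_insert_of_notMem (by simp [hab, hac, hda.symm]) (Set.toFinite _),
        Set.ncard_insert_of_notMem (by simp [hbc, hdb.symm]) (Set.toFinite _),
        Set.ncard_pair hdc.symm]
  have hnad : ¬ G.Adj a d := by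
    intro hadv
    have hmem : d ∈ G.neighborSet a ∩ A := ⟨hadv, hdA⟩
    rw [hNa] at hmem
    rcases hmem with hx | hx
    · exact hdb hx
    · exact hdc hx
  have hNd : G.neighborSet d ∩ A = {b, c} := by
    refine Set.eq_of_subset_of_ncard_le ?_ ?_ (Set.toFinite _)
    · rintro x ⟨hx1, hx2⟩
      rw [hAeq] at hx2
      rcases hx2 with rfl | rfl | rfl | rfl
      · exact absurd (SimpleGraph.Adj.symm hx1) hnad
      · exact Set.mem_insert _ _
      · exact Set.mem_insert_iff.mpr (Or.inr rfl)
      · exact absurd rfl (G.ne_of_adj hx1).symm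
    · rw [Set.ncard_pair hbc, hdeg d hdA]
  have hadjdb : G.Adj d b := by
    have : b ∈ G.neighborSet d ∩ A := by rw [hNd]; exact Set.mem_insert _ _
    exact this.1
  have hadjdc : G.Adj d c := by
    have : c ∈ G.neighborSet d ∩ A := by rw [hNd]; exact Set.mem_insert_iff.mpr (Or.inr rfl)
    exact this.1
  have hNb : G.neighborSet b ∩ A = {a, d} := by
    refine (Set.eq_of_subset_of_ncard_le ?_ ?_ (Set.toFinite _)).symm
    · rintro x (rfl | rfl)
      · exact ⟨hadjab.symm, ha⟩
      · exact ⟨hadjdb.symm, hdA⟩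
    · rw [Set.ncard_pair (fun hx => hda (hx.symm)), hdeg b hbA]
  have hnbc : ¬ G.Adj b c := by
    intro hx
    have hmem : c ∈ G.neighborSet b ∩ A := ⟨hx, hcA⟩
    rw [hNb] at hmem
    rcases hmem with hy | hy
    · exact hac hy.symm
    · exact hdc hy.symm
  set f : Fin 4 → ↥A := ![⟨a, ha⟩, ⟨b, hbA⟩, ⟨d, hdA⟩, ⟨c, hcA⟩] with hf
  have hinj : Function.Injective f := by
    intro i j hij
    have h' : (f i : V) = (f j : V) := congrArg Subtype.val hij
    clear hij
    fin_cases i <;> fin_cases j <;>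
      first
        | rfl
        | (exfalso
           simp only [hf, Matrix.cons_val_zero, Matrix.cons_val_one, Matrix.head_cons,
             Matrix.cons_val_two, Matrix.tail_cons, Matrix.cons_val_three] at h'
           first
             | exact hab h' | exact hab h'.symm
             | exact hac h' | exact hac h'.symm
             | exact hbc h' | exact hbc h'.symm
             | exact hda h' | exact hda h'.symm
             | exact hdb h' | exact hdb h'.symm
             | exact hdc h' | exact hdc h'.symm)
  have hbij : Function.Bijective f := by
    refine (Nat.bijective_iff_injective_and_card f).mpr ⟨hinj, ?_⟩
    rw [Nat.card_coe_set_eq, h4, Nat.card_eq_fintype_card, Fintype.card_fin]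
  have hmap : ∀ i j : Fin 4, (G.induce A).Adj (f i) (f j) ↔
      (SimpleGraph.cycleGraph 4).Adj i j := by
    intro i j
    fin_cases i <;> fin_cases j <;>
      simp only [hf, Matrix.cons_val_zero, Matrix.cons_val_one, Matrix.head_cons,
        Matrix.cons_val_two, Matrix.tail_cons, Matrix.cons_val_three] <;>
      first
        | exact iff_of_true hadjab (by decide)
        | exact iff_of_true hadjab.symm (by decide)
        | exact iff_of_true hadjac (by decide)
        | exact iff_of_true hadjac.symm (by decide)
        | exact iff_of_true hadjdb (by decide)
        | exact iff_of_true hadjdb.symm (by decide)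
        | exact iff_of_true hadjdc (by decide)
        | exact iff_of_true hadjdc.symm (by decide)
        | exact iff_of_false (G.irrefl) (by decide)
        | exact iff_of_false hnad (by decide)
        | exact iff_of_false (fun hx => hnad hx.symm) (by decide)
        | exact iff_of_false hnbc (by decide)
        | exact iff_of_false (fun hx => hnbc hx.symm) (by decide)
  exact ⟨(RelIso.mk (Equiv.ofBijective f hbij) (fun {i j} => hmap i j)).symm⟩

end VTaux

open VTpaper in
/-- In a 3-regular internally-4-connected vertex-transitive finite graph,
a totally-nested tetra-cut has a side inducing a 4-cycle. -/
theorem stmt_17 {V : Type*} [Fintype V] (G : SimpleGraph V)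
    (hreg : Regular G 3) (hi4 : InternallyFourConnected G)
    (hvt : VertexTransitive G) (A₁ A₂ : Set V)
    (h : IsTetraCut G A₁ A₂)
    (hnest : ∀ C D : Set V, IsTetraCut G C D → NestedCut A₁ A₂ C D) :
    Nonempty (G.induce A₁ ≃g SimpleGraph.cycleGraph 4) ∨
    Nonempty (G.induce A₂ ≃g SimpleGraph.cycleGraph 4) := by
  rcases le_total A₁.ncard A₂.ncard with hle | hle
  · left
    have hcov := VTaux.endpoint_cover hvt h hnest hle
    obtain ⟨h4, hdeg⟩ := VTaux.side_structure hreg h hcov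
    exact VTaux.c4_of_deg2 h4 hdeg
  · right
    have h' := VTaux.isTetraCut_comm h
    have hnest' : ∀ C D : Set V, IsTetraCut G C D → NestedCut A₂ A₁ C D := by
      intro C D hCD
      have hn := hnest C D hCD
      unfold NestedCut at hn ⊢
      tauto
    have hcov := VTaux.endpoint_cover hvt h' hnest' hle
    obtain ⟨h4, hdeg⟩ := VTaux.side_structure hreg h' hcov
    exact VTaux.c4_of_deg2 h4 hdeg
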